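/- Let E be a POM on a measurable space (Ω,𝒜) with values in the bounded operators on a complex separable Hilbert space H. If E has the norm-1-property, then E is regular: for every X ∈ 𝒜 with E(X) ≠ 0 and E(X) ≠ I, neither E(X) ≤ I − E(X) nor I − E(X) ≤ E(X) holds. -/
import Mathlib
set_option maxHeartbeats 1000000

open MeasureTheory ContinuousLinearMap
open scoped InnerProductSpace

section Aux

variable {H : Type*} [NormedAddCommGroup H] [InnerProductSpace ℂ H] [CompleteSpace H]

lemma clm_ext_inner (S T : H →L[ℂ] H) (h : ∀ x : H, ⟪x, S x⟫_ℂ = ⟪x, T x⟫_ℂ) : S = T := by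
  have : (S : H →ₗ[ℂ] H) = (T : H →ₗ[ℂ] H) := by
    rw [← ext_inner_map]
    intro x
    simp only [ContinuousLinearMap.coe_coe]
    rw [← inner_conj_symm, h x, inner_conj_symm]
  exact ContinuousLinearMap.coe_injective this

lemma norm_le_half_of_le_compl {A : H →L[ℂ] H} (hA : 0 ≤ A) (h : A ≤ 1 - A) :
    ‖A‖ ≤ 1 / 2 := by
  have hApos : A.IsPositive := (ContinuousLinearMap.nonneg_iff_isPositive A).mp hA
  have h2 : A + A ≤ 1 := by
    rw [ContinuousLinearMap.le_def]
    have h' := (ContinuousLinearMap.le_def A (1 - A)).mp h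
    have : (1 : H →L[ℂ] H) - (A + A) = 1 - A - A := by abel
    rw [this]
    exact h'
  have h0 : (0 : H →L[ℂ] H) ≤ A + A := by
    rw [ContinuousLinearMap.nonneg_iff_isPositive]
    exact hApos.add hApos
  have hnle := CStarAlgebra.norm_le_norm_of_nonneg_of_le h0 h2
  have hone : ‖(1 : H →L[ℂ] H)‖ ≤ 1 := by
    rw [ContinuousLinearMap.one_def]; exact ContinuousLinearMap.norm_id_le
  have h2A : ‖A + A‖ = 2 * ‖A‖ := by
    rw [← two_smul ℂ A, norm_smul]
    simp
  linarith

end Aux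

/-- If a POM has the norm-1-property, then it is regular: every
nontrivial effect in its range is regular. -/
theorem pom_norm_one_implies_regular
    {Ω : Type*} [MeasurableSpace Ω]
    {H : Type*} [NormedAddCommGroup H] [InnerProductSpace ℂ H] [CompleteSpace H]
    [TopologicalSpace.SeparableSpace H]
    (E : Set Ω → (H →L[ℂ] H))
    (hpos : ∀ X : Set Ω, MeasurableSet X → 0 ≤ E X)
    (hbdd : ∀ X : Set Ω, MeasurableSet X → E X ≤ 1)
    (huniv : E Set.univ = 1)
    (hadd : ∀ (φ : H) (X : ℕ → Set Ω), (∀ i, MeasurableSet (X i)) →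
      Pairwise (Function.onFun Disjoint X) →
      HasSum (fun i => ⟪φ, E (X i) φ⟫_ℂ) ⟪φ, E (⋃ i, X i) φ⟫_ℂ)
    (hnorm1 : ∀ X : Set Ω, MeasurableSet X → E X ≠ 0 → ‖E X‖ = 1) :
    ∀ X : Set Ω, MeasurableSet X → E X ≠ 0 → E X ≠ 1 →
      ¬ (E X ≤ 1 - E X) ∧ ¬ (1 - E X ≤ E X) := by
  intro X hX hne hne1
  -- E ∅ = 0
  have hempty : E ∅ = 0 := by
    apply clm_ext_inner
    intro φ
    have h := hadd φ (fun _ => ∅) (fun _ => MeasurableSet.empty)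
      (fun i j hij => by simp [Function.onFun])
    simp only [Set.iUnion_empty] at h
    have h0 : (⟪φ, E ∅ φ⟫_ℂ) = 0 :=
      tendsto_nhds_unique tendsto_const_nhds h.summable.tendsto_cofinite_zero
    simpa using h0
  -- E Xᶜ = 1 - E X
  have hcomp : E Xᶜ = 1 - E X := by
    have hsum : E X + E Xᶜ = 1 := by
      apply clm_ext_inner
      intro φ
      set f : ℕ → Set Ω := fun n => if n = 0 then X else if n = 1 then Xᶜ else ∅ with hf
      have hmeas : ∀ i, MeasurableSet (f i) := by
        intro i; simp only [hf]; split_ifs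
        exacts [hX, hX.compl, MeasurableSet.empty]
      have hdisj : Pairwise (Function.onFun Disjoint f) := by
        intro i j hij
        simp only [Function.onFun, hf]
        split_ifs with h1 h2 h2 h3 h4 h3 h4 <;>
          simp_all [disjoint_compl_right, disjoint_compl_left]
      have hU : (⋃ i, f i) = Set.univ := by
        apply Set.eq_univ_of_forall
        intro x
        by_cases hx : x ∈ X
        · exact Set.mem_iUnion.mpr ⟨0, by simpa [hf]⟩
        · exact Set.mem_iUnion.mpr ⟨1, by simpa [hf]⟩
      have h1 := hadd φ f hmeas hdisj
      rw [hU, huniv] at h1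
      have h2 : HasSum (fun i => ⟪φ, E (f i) φ⟫_ℂ)
          (∑ i ∈ ({0, 1} : Finset ℕ), ⟪φ, E (f i) φ⟫_ℂ) := by
        apply hasSum_sum_of_ne_finset_zero
        intro i hi
        simp only [Finset.mem_insert, Finset.mem_singleton, not_or] at hi
        have : f i = ∅ := by simp only [hf]; rw [if_neg hi.1, if_neg hi.2]
        rw [this, hempty]; simp
      have h3 := h2.unique h1
      have hs : (∑ i ∈ ({0, 1} : Finset ℕ), ⟪φ, E (f i) φ⟫_ℂ)
          = ⟪φ, E X φ⟫_ℂ + ⟪φ, E Xᶜ φ⟫_ℂ := by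
        rw [Finset.sum_pair (by norm_num)]
        simp [hf]
      rw [hs] at h3
      simpa [inner_add_right] using h3
    exact eq_sub_of_add_eq' hsum
  constructor
  · intro h
    have hb := norm_le_half_of_le_compl (hpos X hX) h
    have h1 := hnorm1 X hX hne
    linarith
  · intro h
    have hcne : E Xᶜ ≠ 0 := by
      intro h0
      rw [h0] at hcomp
      exact hne1 (sub_eq_zero.mp hcomp.symm).symm
    have hle : E Xᶜ ≤ 1 - E Xᶜ := by
      rw [hcomp]
      have : (1 : H →L[ℂ] H) - (1 - E X) = E X := by abel
      rw [this]
      exact h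
    have hb := norm_le_half_of_le_compl (hpos Xᶜ hX.compl) hle
    have h1 := hnorm1 Xᶜ hX.compl hcne
    linarith
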